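/- arXiv:2009.13445 — 4 statements merged into one kernel-verified Lean document; each statement's English description precedes it below -/
import Mathlib

section
/- There is a constant C > 0 such that for any functions f, g, h on Ω = 𝕋 × ℝ with f, ∂₁f, g, ∂₂g, h ∈ L²(Ω), the triple product integral satisfies |∫_Ω f g h dx| ≤ C ‖f‖_{L²}^{1/2} (‖f‖_{L²} + ‖∂₁f‖_{L²})^{1/2} ‖g‖_{L²}^{1/2} ‖∂₂g‖_{L²}^{1/2} ‖h‖_{L²}. -/
/-!
Along each horizontal circle, `f(·, y)² ≤ ∫ f(·, y)² + 2 ∫ |f ∂₁f|(·, y)`: by `(f²)' = 2 f ∂₁f`,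
compare `f²` with its value at a point where it does not exceed its mean. Along each vertical line,
`g(x, ·)² ≤ 2 ∫ |g ∂₂g|(x, ·)`, comparing this time with a point where `g²` is arbitrarily small.
So `(f g)²(x, y) ≤ B(x) A(y)` with `A`, `B` integrable, and Fubini gives
`‖f g‖₂² ≤ ∫ A · ∫ B ≤ 2 ‖f‖ (‖f‖ + ‖∂₁f‖) · 2 ‖g‖ ‖∂₂g‖`; Cauchy–Schwarz against `h` concludes.
-/

open MeasureTheory Real

noncomputable def pd1 (f : ℝ × ℝ → ℝ) : ℝ × ℝ → ℝ := fun p => deriv (fun x => f (x, p.2)) p.1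
noncomputable def pd2 (f : ℝ × ℝ → ℝ) : ℝ × ℝ → ℝ := fun p => deriv (fun y => f (p.1, y)) p.2
noncomputable def havg (f : ℝ × ℝ → ℝ) : ℝ → ℝ := fun y => ∫ x in (0:ℝ)..1, f (x, y)
noncomputable def osc (f : ℝ × ℝ → ℝ) : ℝ × ℝ → ℝ := fun p => f p - havg f p.2
noncomputable def μΩ : Measure (ℝ × ℝ) :=
  ((volume : Measure ℝ).restrict (Set.Ioc (0:ℝ) 1)).prod (volume : Measure ℝ)
/-- Periodicity with period 1 in the first (horizontal) variable: `f` lives on `𝕋 × ℝ`. -/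
def Per (f : ℝ × ℝ → ℝ) : Prop := ∀ x y, f (x + 1, y) = f (x, y)

open Set
open scoped Interval

namespace MeasureTheory

variable {α : Type*} [MeasurableSpace α] {μ : Measure α} {u v : α → ℝ}

theorem MemLp.integral_mul_eq_inner (hu : MemLp u 2 μ) (hv : MemLp v 2 μ) :
    ∫ x, u x * v x ∂μ = inner ℝ (hu.toLp u) (hv.toLp v) := by
  rw [L2.inner_def]
  refine integral_congr_ae ?_
  filter_upwards [hu.coeFn_toLp, hv.coeFn_toLp] with x hux hvx
  rw [Real.inner_apply, hux, hvx]

theorem MemLp.integral_sq_eq (hu : MemLp u 2 μ) :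
    ∫ x, u x ^ 2 ∂μ = (eLpNorm u 2 μ).toReal ^ 2 := by
  simp_rw [sq]
  rw [hu.integral_mul_eq_inner hu, real_inner_self_eq_norm_mul_norm, Lp.norm_toLp]

theorem MemLp.abs_integral_mul_le (hu : MemLp u 2 μ) (hv : MemLp v 2 μ) :
    |∫ x, u x * v x ∂μ| ≤ (eLpNorm u 2 μ).toReal * (eLpNorm v 2 μ).toReal := by
  rw [hu.integral_mul_eq_inner hv, ← Lp.norm_toLp u hu, ← Lp.norm_toLp v hv]
  exact abs_real_inner_le_norm _ _

theorem MemLp.integral_abs_mul_le (hu : MemLp u 2 μ) (hv : MemLp v 2 μ) :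
    ∫ x, |u x * v x| ∂μ ≤ (eLpNorm u 2 μ).toReal * (eLpNorm v 2 μ).toReal := by
  have h := hu.norm.abs_integral_mul_le hv.norm
  rw [eLpNorm_norm, eLpNorm_norm] at h
  simp only [Real.norm_eq_abs, ← abs_mul] at h
  exact (le_abs_self _).trans h

theorem abs_integral_mul_le_sqrt_integral_mul_integral {β : Type*} [MeasurableSpace β]
    {ν : Measure β} [SFinite μ] [SFinite ν] {F H : α × β → ℝ} {a : α → ℝ} {b : β → ℝ}
    (hF : AEStronglyMeasurable F (μ.prod ν)) (hFab : ∀ᵐ p ∂μ.prod ν, F p ^ 2 ≤ a p.1 * b p.2)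
    (ha : Integrable a μ) (hb : Integrable b ν) (hH : MemLp H 2 (μ.prod ν)) :
    |∫ p, F p * H p ∂μ.prod ν| ≤
      √((∫ x, a x ∂μ) * ∫ y, b y ∂ν) * (eLpNorm H 2 (μ.prod ν)).toReal := by
  have hab := ha.mul_prod hb
  have hF2 : Integrable (fun p => F p ^ 2) (μ.prod ν) :=
    hab.mono' (hF.pow 2) (hFab.mono fun p hp => by rwa [Real.norm_of_nonneg (sq_nonneg _)])
  have hFL2 : MemLp F 2 (μ.prod ν) := (memLp_two_iff_integrable_sq hF).2 hF2
  have hnormF : (eLpNorm F 2 (μ.prod ν)).toReal ≤ √((∫ x, a x ∂μ) * ∫ y, b y ∂ν) := by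
    refine (le_abs_self _).trans (Real.abs_le_sqrt ?_)
    rw [← hFL2.integral_sq_eq, ← integral_prod_mul]
    exact integral_mono_ae hF2 hab hFab
  exact (hFL2.abs_integral_mul_le hH).trans
    (mul_le_mul_of_nonneg_right hnormF ENNReal.toReal_nonneg)

end MeasureTheory

theorem sq_le_sq_add_two_mul_integral_abs_mul_deriv {F : ℝ → ℝ} (hF : Differentiable ℝ F)
    {s z : ℝ} (hint : IntervalIntegrable (fun t => F t * deriv F t) volume s z) :
    F z ^ 2 ≤ F s ^ 2 + 2 * ∫ t in Ι s z, |F t * deriv F t| := by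
  have hFTC : ∫ t in s..z, 2 * (F t * deriv F t) = F z ^ 2 - F s ^ 2 :=
    intervalIntegral.integral_eq_sub_of_hasDerivAt
      (fun t _ => ((hF t).hasDerivAt.pow 2).congr_deriv (by ring)) (hint.const_mul 2)
  have habs := intervalIntegral.norm_integral_le_integral_norm_uIoc
    (f := fun t => 2 * (F t * deriv F t)) (a := s) (b := z) (μ := volume)
  simp only [Real.norm_eq_abs, abs_mul (2 : ℝ), abs_two, integral_const_mul, hFTC] at habs
  linarith [le_abs_self (F z ^ 2 - F s ^ 2)]

theorem sq_le_two_mul_integral_abs_mul_deriv {G : ℝ → ℝ} (hG : Differentiable ℝ G)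
    (hG2 : Integrable (fun t => G t ^ 2)) (hGG' : Integrable (fun t => G t * deriv G t))
    (y : ℝ) : G y ^ 2 ≤ 2 * ∫ t, |G t * deriv G t| := by
  refine le_of_forall_pos_le_add fun ε hε => ?_
  obtain ⟨s, hs⟩ : ∃ s, G s ^ 2 < ε := by
    by_contra! hge
    have hlt := hG2.measure_norm_ge_lt_top hε
    simp [sq_abs, hge] at hlt
  calc G y ^ 2 ≤ G s ^ 2 + 2 * ∫ t in Ι s y, |G t * deriv G t| :=
        sq_le_sq_add_two_mul_integral_abs_mul_deriv hG hGG'.intervalIntegrable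
    _ ≤ (2 * ∫ t, |G t * deriv G t|) + ε := by
        have := setIntegral_le_integral (s := Ι s y) hGG'.abs (.of_forall fun t => abs_nonneg _)
        linarith

theorem sq_le_integral_Ioc_add_two_mul_integral_abs_mul_deriv {F : ℝ → ℝ}
    (hF : Differentiable ℝ F) (hper : Function.Periodic F 1)
    (hF2 : IntegrableOn (fun t => F t ^ 2) (Ioc 0 1))
    (hFF' : IntegrableOn (fun t => F t * deriv F t) (Ioc 0 1)) (x : ℝ) :
    F x ^ 2 ≤ (∫ t in Ioc 0 1, F t ^ 2) + 2 * ∫ t in Ioc 0 1, |F t * deriv F t| := by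
  obtain ⟨z, hz, hxz⟩ := hper.exists_mem_Ico₀ one_pos x
  obtain ⟨s, hs, hsF⟩ := exists_le_setAverage (by simp) (by simp) hF2
  simp only [setAverage_eq, Real.volume_real_Ioc, sub_zero, max_eq_left zero_le_one, inv_one,
    one_smul] at hsF
  have hsub : Ι s z ⊆ Ioc 0 1 :=
    Ioc_subset_Ioc (le_min hs.1.le hz.1) (max_le hs.2 hz.2.le)
  calc F x ^ 2 = F z ^ 2 := by rw [hxz]
    _ ≤ F s ^ 2 + 2 * ∫ t in Ι s z, |F t * deriv F t| :=
        sq_le_sq_add_two_mul_integral_abs_mul_deriv hF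
          ((intervalIntegrable_iff).2 (hFF'.mono_set hsub))
    _ ≤ _ := by
        have := setIntegral_mono_set hFF'.abs (.of_forall fun t => abs_nonneg _) hsub.eventuallyLE
        linarith

noncomputable def sliceBound₁ (f : ℝ × ℝ → ℝ) (y : ℝ) : ℝ :=
  (∫ t in Ioc 0 1, f (t, y) ^ 2) + 2 * ∫ t in Ioc 0 1, |f (t, y) * pd1 f (t, y)|

noncomputable def sliceBound₂ (g : ℝ × ℝ → ℝ) (x : ℝ) : ℝ :=
  2 * ∫ t, |g (x, t) * pd2 g (x, t)|

theorem sliceBound₁_nonneg (f : ℝ × ℝ → ℝ) (y : ℝ) : 0 ≤ sliceBound₁ f y :=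
  add_nonneg (integral_nonneg fun _ => sq_nonneg _)
    (mul_nonneg zero_le_two (integral_nonneg fun _ => abs_nonneg _))

theorem sliceBound₂_nonneg (g : ℝ × ℝ → ℝ) (x : ℝ) : 0 ≤ sliceBound₂ g x :=
  mul_nonneg zero_le_two (integral_nonneg fun _ => abs_nonneg _)

section

variable {f : ℝ × ℝ → ℝ} {ν : Measure ℝ} [SFinite ν]

theorem ae_sq_le_sliceBound₁ (hper : Per f) (hf : Differentiable ℝ f)
    (hf2 : Integrable (fun p => f p ^ 2) ((volume.restrict (Ioc 0 1)).prod ν))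
    (hff : Integrable (fun p => f p * pd1 f p) ((volume.restrict (Ioc 0 1)).prod ν)) :
    ∀ᵐ p ∂(volume.restrict (Ioc 0 1)).prod ν, f p ^ 2 ≤ sliceBound₁ f p.2 := by
  have hslice : ∀ᵐ y ∂ν, ∀ x, f (x, y) ^ 2 ≤ sliceBound₁ f y := by
    filter_upwards [hf2.prod_left_ae, hff.prod_left_ae] with y hy2 hyy x
    exact sq_le_integral_Ioc_add_two_mul_integral_abs_mul_deriv
      (hf.comp (differentiable_id.prodMk (differentiable_const y))) (fun t => hper t y) hy2 hyy x
  exact Measure.quasiMeasurePreserving_snd.ae hslice |>.mono fun p hp => hp p.1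

theorem integrable_sliceBound₁
    (hf2 : Integrable (fun p => f p ^ 2) ((volume.restrict (Ioc 0 1)).prod ν))
    (hff : Integrable (fun p => f p * pd1 f p) ((volume.restrict (Ioc 0 1)).prod ν)) :
    Integrable (sliceBound₁ f) ν :=
  hf2.integral_prod_right.add (hff.abs.integral_prod_right.const_mul 2)

theorem integral_sliceBound₁
    (hf2 : Integrable (fun p => f p ^ 2) ((volume.restrict (Ioc 0 1)).prod ν))
    (hff : Integrable (fun p => f p * pd1 f p) ((volume.restrict (Ioc 0 1)).prod ν)) :
    ∫ y, sliceBound₁ f y ∂ν = (∫ p, f p ^ 2 ∂(volume.restrict (Ioc 0 1)).prod ν) +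
      2 * ∫ p, |f p * pd1 f p| ∂(volume.restrict (Ioc 0 1)).prod ν := by
  rw [integral_prod_symm _ hf2, integral_prod_symm _ hff.abs, ← integral_const_mul,
    ← integral_add hf2.integral_prod_right (hff.abs.integral_prod_right.const_mul 2)]
  rfl

theorem integral_sliceBound₁_le (hf : MemLp f 2 ((volume.restrict (Ioc 0 1)).prod ν))
    (hf1 : MemLp (pd1 f) 2 ((volume.restrict (Ioc 0 1)).prod ν)) :
    ∫ y, sliceBound₁ f y ∂ν ≤ 2 * ((eLpNorm f 2 ((volume.restrict (Ioc 0 1)).prod ν)).toReal *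
      ((eLpNorm f 2 ((volume.restrict (Ioc 0 1)).prod ν)).toReal +
        (eLpNorm (pd1 f) 2 ((volume.restrict (Ioc 0 1)).prod ν)).toReal)) := by
  rw [integral_sliceBound₁ hf.integrable_sq (hf.integrable_mul hf1), hf.integral_sq_eq]
  nlinarith [hf.integral_abs_mul_le hf1]

end

section

variable {g : ℝ × ℝ → ℝ} {μ : Measure ℝ}

theorem ae_sq_le_sliceBound₂ [SFinite μ] (hg : Differentiable ℝ g)
    (hg2 : Integrable (fun p => g p ^ 2) (μ.prod volume))
    (hgg : Integrable (fun p => g p * pd2 g p) (μ.prod volume)) :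
    ∀ᵐ p ∂μ.prod volume, g p ^ 2 ≤ sliceBound₂ g p.1 := by
  have hslice : ∀ᵐ x ∂μ, ∀ y, g (x, y) ^ 2 ≤ sliceBound₂ g x := by
    filter_upwards [hg2.prod_right_ae, hgg.prod_right_ae] with x hx2 hxx y
    exact sq_le_two_mul_integral_abs_mul_deriv
      (hg.comp ((differentiable_const x).prodMk differentiable_id)) hx2 hxx y
  exact Measure.quasiMeasurePreserving_fst.ae hslice |>.mono fun p hp => hp p.2

theorem integrable_sliceBound₂ (hgg : Integrable (fun p => g p * pd2 g p) (μ.prod volume)) :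
    Integrable (sliceBound₂ g) μ :=
  hgg.abs.integral_prod_left.const_mul 2

theorem integral_sliceBound₂ [SFinite μ]
    (hgg : Integrable (fun p => g p * pd2 g p) (μ.prod volume)) :
    ∫ x, sliceBound₂ g x ∂μ = 2 * ∫ p, |g p * pd2 g p| ∂μ.prod volume := by
  rw [integral_prod _ hgg.abs, ← integral_const_mul]
  rfl

theorem integral_sliceBound₂_le [SFinite μ] (hg : MemLp g 2 (μ.prod volume))
    (hg2 : MemLp (pd2 g) 2 (μ.prod volume)) :
    ∫ x, sliceBound₂ g x ∂μ ≤
      2 * ((eLpNorm g 2 (μ.prod volume)).toReal * (eLpNorm (pd2 g) 2 (μ.prod volume)).toReal) := by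
  rw [integral_sliceBound₂ (hg.integrable_mul hg2)]
  exact mul_le_mul_of_nonneg_left (hg.integral_abs_mul_le hg2) zero_le_two

end

theorem sqrt_two_mul_mul_two_mul_mul {a b c d : ℝ} (ha : 0 ≤ a) (hb : 0 ≤ b) (hc : 0 ≤ c)
    (hd : 0 ≤ d) (e : ℝ) :
    √(2 * (c * d) * (2 * (a * b))) * e =
      2 * a ^ (1 / 2 : ℝ) * b ^ (1 / 2 : ℝ) * c ^ (1 / 2 : ℝ) * d ^ (1 / 2 : ℝ) * e := by
  rw [show 2 * (c * d) * (2 * (a * b)) = 2 ^ 2 * a * b * c * d by ring, sqrt_mul' _ hd,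
    sqrt_mul' _ hc, sqrt_mul' _ (by positivity), sqrt_mul' _ ha, sqrt_sq zero_le_two]
  simp only [sqrt_eq_rpow]

/-- Anisotropic bound on the triple product:
`|∫ f g h| ≤ C ‖f‖^{1/2} (‖f‖ + ‖∂₁f‖)^{1/2} ‖g‖^{1/2} ‖∂₂g‖^{1/2} ‖h‖`. -/
theorem stmt7 : ∃ C : ℝ, 0 < C ∧ ∀ f g h : ℝ × ℝ → ℝ,
    Per f → Per g → Per h → Differentiable ℝ f → Differentiable ℝ g →
    MemLp f 2 μΩ → MemLp (pd1 f) 2 μΩ →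
    MemLp g 2 μΩ → MemLp (pd2 g) 2 μΩ → MemLp h 2 μΩ →
    |∫ p, f p * g p * h p ∂μΩ| ≤
      C * (eLpNorm f 2 μΩ).toReal ^ (1/2 : ℝ) *
        ((eLpNorm f 2 μΩ).toReal + (eLpNorm (pd1 f) 2 μΩ).toReal) ^ (1/2 : ℝ) *
        (eLpNorm g 2 μΩ).toReal ^ (1/2 : ℝ) * (eLpNorm (pd2 g) 2 μΩ).toReal ^ (1/2 : ℝ) *
        (eLpNorm h 2 μΩ).toReal := by
  refine ⟨2, two_pos, fun f g h hpf _ _ hdf hdg hf hf1 hg hg2 hh => ?_⟩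
  have hff1 : Integrable (fun p => f p * pd1 f p) μΩ := hf.integrable_mul hf1
  have hgg2 : Integrable (fun p => g p * pd2 g p) μΩ := hg.integrable_mul hg2
  have hfg : ∀ᵐ p ∂μΩ, (f p * g p) ^ 2 ≤ sliceBound₂ g p.1 * sliceBound₁ f p.2 := by
    filter_upwards [ae_sq_le_sliceBound₁ hpf hdf hf.integrable_sq hff1,
      ae_sq_le_sliceBound₂ hdg hg.integrable_sq hgg2] with p hfp hgp
    rw [mul_pow, mul_comm]
    exact mul_le_mul hgp hfp (sq_nonneg _) (sliceBound₂_nonneg g p.1)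
  have hfgh := abs_integral_mul_le_sqrt_integral_mul_integral (hf.1.mul hg.1) hfg
    (integrable_sliceBound₂ hgg2) (integrable_sliceBound₁ hf.integrable_sq hff1) hh
  refine hfgh.trans (le_of_le_of_eq ?_ (sqrt_two_mul_mul_two_mul_mul
    (a := (eLpNorm f 2 μΩ).toReal) (b := (eLpNorm f 2 μΩ).toReal + (eLpNorm (pd1 f) 2 μΩ).toReal)
    (c := (eLpNorm g 2 μΩ).toReal) (d := (eLpNorm (pd2 g) 2 μΩ).toReal)
    ENNReal.toReal_nonneg (by positivity) ENNReal.toReal_nonneg ENNReal.toReal_nonneg _))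
  exact mul_le_mul_of_nonneg_right (sqrt_le_sqrt (mul_le_mul (integral_sliceBound₂_le hg hg2)
    (integral_sliceBound₁_le hf hf1) (integral_nonneg (sliceBound₁_nonneg f)) (by positivity)))
    ENNReal.toReal_nonneg
end

section
/- There is a constant C > 0 such that for any f ∈ H²(𝕋 × ℝ), ‖f‖_{L^∞(Ω)} ≤ C ‖f‖_{L²}^{1/4} (‖f‖_{L²} + ‖∂₁f‖_{L²})^{1/4} ‖∂₂f‖_{L²}^{1/4} (‖∂₂f‖_{L²} + ‖∂₁∂₂f‖_{L²})^{1/4}. -/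
open MeasureTheory Real

/-!
Two one-dimensional estimates are composed. Vertically, for `φ ∈ H¹(ℝ)` the function `φ²` has
integrable derivative and tends to `0` at `+∞`, so `φ(y)² = -∫_y^∞ (φ²)' ≤ 2 ‖φ‖ ‖φ'‖`.
Horizontally, averaging `g(x,y)² ≤ g(x',y)² + ∫₀¹ |∂₁(g²)(s,y)| ds` over `x' ∈ (0,1]` and then
integrating in `y` bounds every vertical slice: `‖g(x,·)‖² ≤ ‖g‖² + 2 ‖g‖ ‖∂₁g‖`.
Taking `φ = f(x,·)` and `g ∈ {f, ∂₂f}` gives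
`|f(x,y)|⁴ ≤ 16 ‖f‖ (‖f‖ + ‖∂₁f‖) ‖∂₂f‖ (‖∂₂f‖ + ‖∂₁∂₂f‖)`, i.e. the bound with `C = 2`.
-/

open Set Filter

lemma MeasureTheory.MemLp.toReal_eLpNorm_two_sq {α : Type*} [MeasurableSpace α] {μ : Measure α}
    {f : α → ℝ} (hf : MemLp f 2 μ) : (eLpNorm f 2 μ).toReal ^ 2 = ∫ a, f a ^ 2 ∂μ := by
  rw [hf.eLpNorm_eq_integral_rpow_norm two_ne_zero ENNReal.ofNat_ne_top,
    ENNReal.toReal_ofReal (by positivity)]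
  simp only [ENNReal.toReal_ofNat, Real.norm_eq_abs, Real.rpow_two, sq_abs]
  rw [← Real.rpow_natCast, ← Real.rpow_mul (integral_nonneg fun a => sq_nonneg _)]
  norm_num

lemma MeasureTheory.MemLp.integral_abs_mul_le_s8 {α : Type*} [MeasurableSpace α] {μ : Measure α}
    {f g : α → ℝ} (hf : MemLp f 2 μ) (hg : MemLp g 2 μ) :
    ∫ a, |f a * g a| ∂μ ≤ (eLpNorm f 2 μ).toReal * (eLpNorm g 2 μ).toReal := by
  have h := integral_mul_norm_le_Lp_mul_Lq (μ := μ) Real.HolderConjugate.two_two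
    (by simpa using hf) (by simpa using hg)
  rw [hf.eLpNorm_eq_integral_rpow_norm two_ne_zero ENNReal.ofNat_ne_top,
    hg.eLpNorm_eq_integral_rpow_norm two_ne_zero ENNReal.ofNat_ne_top,
    ENNReal.toReal_ofReal (by positivity), ENNReal.toReal_ofReal (by positivity)]
  simpa [abs_mul, one_div] using h

lemma sq_le_two_mul_eLpNorm_mul_eLpNorm_deriv {φ φ' : ℝ → ℝ} (hφ : ∀ t, HasDerivAt φ (φ' t) t)
    (hφ2 : MemLp φ 2) (hφ'2 : MemLp φ' 2) (y : ℝ) :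
    φ y ^ 2 ≤ 2 * (eLpNorm φ 2).toReal * (eLpNorm φ' 2).toReal := by
  have hsq : ∀ t, HasDerivAt (fun s => φ s ^ 2) (2 * (φ t * φ' t)) t := fun t => by
    simpa [mul_assoc] using (hφ t).fun_pow 2
  have hint : Integrable (fun t => 2 * (φ t * φ' t)) := (hφ2.integrable_mul hφ'2).const_mul 2
  have hdecay : Tendsto (fun t => φ t ^ 2) atTop (nhds 0) :=
    tendsto_zero_of_hasDerivAt_of_integrableOn_Ioi (a := y) (fun t _ => hsq t)
      hint.integrableOn hφ2.integrable_sq.integrableOn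
  have hftc : ∫ t in Ioi y, 2 * (φ t * φ' t) = 0 - φ y ^ 2 :=
    integral_Ioi_of_hasDerivAt_of_tendsto' (fun t _ => hsq t) hint.integrableOn hdecay
  calc φ y ^ 2 = -∫ t in Ioi y, 2 * (φ t * φ' t) := by rw [hftc]; ring
    _ ≤ |∫ t in Ioi y, 2 * (φ t * φ' t)| := neg_le_abs _
    _ ≤ ∫ t in Ioi y, |2 * (φ t * φ' t)| := abs_integral_le_integral_abs
    _ ≤ ∫ t, |2 * (φ t * φ' t)| :=
      setIntegral_le_integral hint.abs (Eventually.of_forall fun _ => abs_nonneg _)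
    _ = 2 * ∫ t, |φ t * φ' t| := by simp only [abs_mul, abs_two, integral_const_mul]
    _ ≤ 2 * ((eLpNorm φ 2).toReal * (eLpNorm φ' 2).toReal) := by
      gcongr; exact hφ2.integral_abs_mul_le_s8 hφ'2
    _ = _ := by ring

lemma abs_le_integral_abs_add_abs_deriv {u u' : ℝ → ℝ}
    (hu : ∀ t, HasDerivAt u (u' t) t) (hu' : Continuous u') {x : ℝ} (hx : x ∈ Icc (0:ℝ) 1) :
    |u x| ≤ ∫ t in Ioc (0:ℝ) 1, (|u t| + |u' t|) := by
  have hu_cont : Continuous u := continuous_iff_continuousAt.2 fun t => (hu t).continuousAt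
  set K := ∫ t in Ioc (0:ℝ) 1, |u' t|
  have hK : ∀ x' ∈ Ioc (0:ℝ) 1, |u x| ≤ |u x'| + K := by
    intro x' hx'
    have hftc : ∫ t in x'..x, u' t = u x - u x' :=
      intervalIntegral.integral_eq_sub_of_hasDerivAt (fun t _ => hu t) (hu'.intervalIntegrable _ _)
    have hsub : uIoc x' x ⊆ Ioc (0:ℝ) 1 :=
      Ioc_subset_Ioc (le_min hx'.1.le hx.1) (max_le hx'.2 hx.2)
    have : |u x - u x'| ≤ K := by
      calc |u x - u x'| = |∫ t in x'..x, u' t| := by rw [hftc]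
        _ ≤ ∫ t in uIoc x' x, |u' t| := by
            simpa only [Real.norm_eq_abs] using
              intervalIntegral.norm_integral_le_integral_norm_uIoc (f := u') (μ := volume)
        _ ≤ K := setIntegral_mono_set (hu'.abs.integrableOn_Ioc)
            (Eventually.of_forall fun _ => abs_nonneg _) hsub.eventuallyLE
    linarith [abs_sub_abs_le_abs_sub (u x) (u x')]
  have hvol : volume.real (Ioc (0:ℝ) 1) = 1 := by simp
  have hconst : IntegrableOn (fun _ => K) (Ioc (0:ℝ) 1) := integrableOn_const measure_Ioc_lt_top.ne
  calc |u x| = ∫ _ in Ioc (0:ℝ) 1, |u x| := by simp [hvol]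
    _ ≤ ∫ x' in Ioc (0:ℝ) 1, (|u x'| + K) :=
        setIntegral_mono_on (integrableOn_const measure_Ioc_lt_top.ne)
          (hu_cont.abs.integrableOn_Ioc.add hconst) measurableSet_Ioc hK
    _ = ∫ t in Ioc (0:ℝ) 1, (|u t| + |u' t|) := by
        rw [integral_add hu_cont.abs.integrableOn_Ioc hconst,
          integral_add hu_cont.abs.integrableOn_Ioc hu'.abs.integrableOn_Ioc,
          setIntegral_const, hvol, one_smul]

lemma pd1_eq_fderiv {g : ℝ × ℝ → ℝ} (hg : Differentiable ℝ g) (p : ℝ × ℝ) :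
    pd1 g p = fderiv ℝ g p (1, 0) :=
  ((hg p).hasFDerivAt.comp_hasDerivAt p.1
    ((hasDerivAt_id p.1).prodMk (hasDerivAt_const p.1 p.2))).deriv

lemma pd2_eq_fderiv {g : ℝ × ℝ → ℝ} (hg : Differentiable ℝ g) (p : ℝ × ℝ) :
    pd2 g p = fderiv ℝ g p (0, 1) :=
  ((hg p).hasFDerivAt.comp_hasDerivAt p.2
    ((hasDerivAt_const p.2 p.1).prodMk (hasDerivAt_id p.2))).deriv

lemma hasDerivAt_pd1 {g : ℝ × ℝ → ℝ} (hg : Differentiable ℝ g) (x y : ℝ) :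
    HasDerivAt (fun s => g (s, y)) (pd1 g (x, y)) x :=
  ((hg _).comp x (differentiableAt_id.prodMk (differentiableAt_const y))).hasDerivAt

lemma hasDerivAt_pd2 {g : ℝ × ℝ → ℝ} (hg : Differentiable ℝ g) (x y : ℝ) :
    HasDerivAt (fun t => g (x, t)) (pd2 g (x, y)) y :=
  ((hg _).comp y ((differentiableAt_const x).prodMk differentiableAt_id)).hasDerivAt

lemma continuous_pd1 {g : ℝ × ℝ → ℝ} (hg : ContDiff ℝ 1 g) : Continuous (pd1 g) := by
  rw [funext (pd1_eq_fderiv (hg.differentiable one_ne_zero))]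
  exact (hg.continuous_fderiv one_ne_zero).clm_apply continuous_const

lemma contDiff_pd2 {g : ℝ × ℝ → ℝ} (hg : ContDiff ℝ 2 g) : ContDiff ℝ 1 (pd2 g) := by
  rw [funext (pd2_eq_fderiv (hg.differentiable two_ne_zero))]
  exact (hg.fderiv_right one_add_one_eq_two.le).clm_apply contDiff_const

lemma ae_fst_mem_Ioc : ∀ᵐ p ∂μΩ, p.1 ∈ Ioc (0:ℝ) 1 :=
  Measure.quasiMeasurePreserving_fst.ae (ae_restrict_mem measurableSet_Ioc)

lemma memLp_slice_and_sq_eLpNorm_slice_le {g : ℝ × ℝ → ℝ} (hg : ContDiff ℝ 1 g)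
    (hg2 : MemLp g 2 μΩ) (hg1 : MemLp (pd1 g) 2 μΩ) {x : ℝ} (hx : x ∈ Icc (0:ℝ) 1) :
    MemLp (fun y => g (x, y)) 2 ∧
      (eLpNorm (fun y => g (x, y)) 2).toReal ^ 2 ≤
        2 * (eLpNorm g 2 μΩ).toReal *
          ((eLpNorm g 2 μΩ).toReal + (eLpNorm (pd1 g) 2 μΩ).toReal) := by
  set F : ℝ × ℝ → ℝ := fun p => |g p ^ 2| + |2 * (g p * pd1 g p)| with hF_def
  have hprod : Integrable (fun p => 2 * (g p * pd1 g p)) μΩ :=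
    (hg2.integrable_mul hg1).const_mul 2
  have hF : Integrable F μΩ := hg2.integrable_sq.abs.add hprod.abs
  have hslice_le : ∀ y, g (x, y) ^ 2 ≤ ∫ s in Ioc (0:ℝ) 1, F (s, y) := fun y =>
    (le_abs_self _).trans <| abs_le_integral_abs_add_abs_deriv
      (fun s => by simpa [mul_assoc] using
        (hasDerivAt_pd1 (hg.differentiable one_ne_zero) s y).fun_pow 2)
      (continuous_const.mul ((hg.continuous.mul (continuous_pd1 hg)).comp
        (continuous_id.prodMk continuous_const))) hx
  have hH : Integrable (fun y => ∫ s in Ioc (0:ℝ) 1, F (s, y)) := hF.integral_prod_right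
  have hcont : Continuous fun y => g (x, y) :=
    hg.continuous.comp (continuous_const.prodMk continuous_id)
  have hsq : Integrable (fun y => g (x, y) ^ 2) :=
    hH.mono' (hcont.pow 2).aestronglyMeasurable (Eventually.of_forall fun y => by
      simpa only [Real.norm_eq_abs, abs_sq] using hslice_le y)
  have hmem : MemLp (fun y => g (x, y)) 2 :=
    (memLp_two_iff_integrable_sq hcont.aestronglyMeasurable).2 hsq
  refine ⟨hmem, ?_⟩
  calc _ = ∫ y, g (x, y) ^ 2 := hmem.toReal_eLpNorm_two_sq
    _ ≤ ∫ y, ∫ s in Ioc (0:ℝ) 1, F (s, y) := integral_mono hsq hH hslice_le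
    _ = ∫ p, F p ∂μΩ := (integral_prod_symm F hF).symm
    _ = (∫ p, g p ^ 2 ∂μΩ) + 2 * ∫ p, |g p * pd1 g p| ∂μΩ := by
      rw [hF_def, integral_add hg2.integrable_sq.abs hprod.abs]
      simp only [abs_sq, abs_mul, abs_two, integral_const_mul]
    _ ≤ (eLpNorm g 2 μΩ).toReal ^ 2 +
        2 * ((eLpNorm g 2 μΩ).toReal * (eLpNorm (pd1 g) 2 μΩ).toReal) := by
      rw [hg2.toReal_eLpNorm_two_sq]
      gcongr
      exact hg2.integral_abs_mul_le_s8 hg1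
    _ ≤ _ := by nlinarith [sq_nonneg (eLpNorm g 2 μΩ).toReal]

lemma le_two_mul_rpow_quarter {a b c d t : ℝ} (ha : 0 ≤ a) (hb : 0 ≤ b) (hc : 0 ≤ c)
    (hd : 0 ≤ d) (h : t ^ 4 ≤ 16 * (a * b * c * d)) :
    t ≤ 2 * a ^ (1/4 : ℝ) * b ^ (1/4 : ℝ) * c ^ (1/4 : ℝ) * d ^ (1/4 : ℝ) := by
  have hquarter : ∀ z : ℝ, 0 ≤ z → (z ^ (1/4 : ℝ)) ^ 4 = z := fun z hz => by
    rw [← Real.rpow_natCast, ← Real.rpow_mul hz]; norm_num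
  refine le_of_pow_le_pow_left₀ four_ne_zero (by positivity) ?_
  rw [mul_pow, mul_pow, mul_pow, mul_pow, hquarter a ha, hquarter b hb, hquarter c hc,
    hquarter d hd]
  linarith

lemma abs_le_two_mul_eLpNorm_rpow_quarter {f : ℝ × ℝ → ℝ} (hf : ContDiff ℝ 2 f)
    (h0 : MemLp f 2 μΩ) (h1 : MemLp (pd1 f) 2 μΩ) (h2 : MemLp (pd2 f) 2 μΩ)
    (h12 : MemLp (pd1 (pd2 f)) 2 μΩ) {x : ℝ} (hx : x ∈ Icc (0:ℝ) 1) (y : ℝ) :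
    |f (x, y)| ≤ 2 * (eLpNorm f 2 μΩ).toReal ^ (1/4 : ℝ) *
      ((eLpNorm f 2 μΩ).toReal + (eLpNorm (pd1 f) 2 μΩ).toReal) ^ (1/4 : ℝ) *
      (eLpNorm (pd2 f) 2 μΩ).toReal ^ (1/4 : ℝ) *
      ((eLpNorm (pd2 f) 2 μΩ).toReal + (eLpNorm (pd1 (pd2 f)) 2 μΩ).toReal) ^ (1/4 : ℝ) := by
  obtain ⟨hφ, hφ_le⟩ := memLp_slice_and_sq_eLpNorm_slice_le (hf.of_le one_le_two) h0 h1 hx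
  obtain ⟨hψ, hψ_le⟩ := memLp_slice_and_sq_eLpNorm_slice_le (contDiff_pd2 hf) h2 h12 hx
  have hagmon := sq_le_two_mul_eLpNorm_mul_eLpNorm_deriv
    (fun t => hasDerivAt_pd2 (hf.differentiable two_ne_zero) x t) hφ hψ y
  set a := (eLpNorm (fun t => f (x, t)) 2).toReal
  set b := (eLpNorm (fun t => pd2 f (x, t)) 2).toReal
  refine le_two_mul_rpow_quarter (by positivity) (by positivity) (by positivity)
    (by positivity) ?_
  calc _ = (f (x, y) ^ 2) ^ 2 := by rw [← sq_abs (f (x, y))]; ring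
    _ ≤ (2 * a * b) ^ 2 := pow_le_pow_left₀ (sq_nonneg _) hagmon 2
    _ = 4 * (a ^ 2 * b ^ 2) := by ring
    _ ≤ 4 * ((2 * (eLpNorm f 2 μΩ).toReal *
          ((eLpNorm f 2 μΩ).toReal + (eLpNorm (pd1 f) 2 μΩ).toReal)) *
        (2 * (eLpNorm (pd2 f) 2 μΩ).toReal *
          ((eLpNorm (pd2 f) 2 μΩ).toReal + (eLpNorm (pd1 (pd2 f)) 2 μΩ).toReal))) := by
      gcongr
    _ = _ := by ring

/-- Anisotropic `L^∞` bound: for `f ∈ H²(𝕋 × ℝ)`,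
`‖f‖_{L^∞} ≤ C ‖f‖^{1/4} (‖f‖+‖∂₁f‖)^{1/4} ‖∂₂f‖^{1/4} (‖∂₂f‖+‖∂₁∂₂f‖)^{1/4}`. -/
theorem stmt8 : ∃ C : ℝ, 0 < C ∧ ∀ f : ℝ × ℝ → ℝ,
    Per f → ContDiff ℝ 2 f →
    MemLp f 2 μΩ → MemLp (pd1 f) 2 μΩ → MemLp (pd2 f) 2 μΩ →
    MemLp (pd1 (pd2 f)) 2 μΩ →
    eLpNorm f ⊤ μΩ ≤ ENNReal.ofReal
      (C * (eLpNorm f 2 μΩ).toReal ^ (1/4 : ℝ) *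
        ((eLpNorm f 2 μΩ).toReal + (eLpNorm (pd1 f) 2 μΩ).toReal) ^ (1/4 : ℝ) *
        (eLpNorm (pd2 f) 2 μΩ).toReal ^ (1/4 : ℝ) *
        ((eLpNorm (pd2 f) 2 μΩ).toReal + (eLpNorm (pd1 (pd2 f)) 2 μΩ).toReal) ^ (1/4 : ℝ)) := by
  refine ⟨2, two_pos, fun f _ hf h0 h1 h2 h12 => ?_⟩
  calc eLpNorm f ⊤ μΩ = eLpNormEssSup f μΩ := eLpNorm_exponent_top
    _ ≤ _ := eLpNormEssSup_le_of_ae_bound <| ae_fst_mem_Ioc.mono fun p hp =>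
      abs_le_two_mul_eLpNorm_rpow_quarter hf h0 h1 h2 h12 (Ioc_subset_Icc_self hp) p.2
end

section
/- There is a constant C > 0 such that for any smooth f on Ω = 𝕋 × ℝ with oscillation f̃ = f − f̄ satisfying ‖∂₁f̃‖_{H¹(Ω)} < ∞, one has ‖f̃‖_{L^∞(Ω)} ≤ C ‖∂₁f̃‖_{H¹(Ω)}. -/
open MeasureTheory Real

open scoped ENNReal

section Aux

variable {f g : ℝ × ℝ → ℝ}

lemma pd1_eq_fderiv_s12 (hf : ContDiff ℝ (⊤ : ℕ∞) f) :
    pd1 f = fun p => fderiv ℝ f p (1, 0) := by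
  funext p
  have h1 : HasDerivAt (fun x : ℝ => (x, p.2)) ((1 : ℝ), (0 : ℝ)) p.1 :=
    (hasDerivAt_id p.1).prodMk (hasDerivAt_const p.1 p.2)
  have h2 : HasDerivAt (fun x => f (x, p.2)) (fderiv ℝ f (p.1, p.2) (1, 0)) p.1 :=
    (((hf.differentiable (by simp)) (p.1, p.2)).hasFDerivAt).comp_hasDerivAt p.1 h1
  simpa [pd1] using h2.deriv

lemma pd2_eq_fderiv_s12 (hf : ContDiff ℝ (⊤ : ℕ∞) f) :
    pd2 f = fun p => fderiv ℝ f p (0, 1) := by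
  funext p
  have h1 : HasDerivAt (fun y : ℝ => (p.1, y)) ((0 : ℝ), (1 : ℝ)) p.2 :=
    (hasDerivAt_const p.2 p.1).prodMk (hasDerivAt_id p.2)
  have h2 : HasDerivAt (fun y => f (p.1, y)) (fderiv ℝ f (p.1, p.2) (0, 1)) p.2 :=
    (((hf.differentiable (by simp)) (p.1, p.2)).hasFDerivAt).comp_hasDerivAt p.2 h1
  simpa [pd2] using h2.deriv

lemma contDiff_pd1 (hf : ContDiff ℝ (⊤ : ℕ∞) f) : ContDiff ℝ (⊤ : ℕ∞) (pd1 f) := by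
  rw [pd1_eq_fderiv_s12 hf]
  exact (hf.fderiv_right (by simp)).clm_apply contDiff_const

lemma contDiff_pd2_s12 (hf : ContDiff ℝ (⊤ : ℕ∞) f) : ContDiff ℝ (⊤ : ℕ∞) (pd2 f) := by
  rw [pd2_eq_fderiv_s12 hf]
  exact (hf.fderiv_right (by simp)).clm_apply contDiff_const

lemma hasDerivAt_fst (hf : ContDiff ℝ (⊤ : ℕ∞) f) (t y : ℝ) :
    HasDerivAt (fun x => f (x, y)) (pd1 f (t, y)) t := by
  have h1 : HasDerivAt (fun x : ℝ => (x, y)) ((1 : ℝ), (0 : ℝ)) t :=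
    (hasDerivAt_id t).prodMk (hasDerivAt_const t y)
  have h2 : HasDerivAt (fun x => f (x, y)) (fderiv ℝ f (t, y) (1, 0)) t :=
    (((hf.differentiable (by simp)) (t, y)).hasFDerivAt).comp_hasDerivAt t h1
  rw [pd1_eq_fderiv_s12 hf]
  exact h2

lemma hasDerivAt_snd (hf : ContDiff ℝ (⊤ : ℕ∞) f) (x t : ℝ) :
    HasDerivAt (fun y => f (x, y)) (pd2 f (x, t)) t := by
  have h1 : HasDerivAt (fun y : ℝ => (x, y)) ((0 : ℝ), (1 : ℝ)) t :=
    (hasDerivAt_const t x).prodMk (hasDerivAt_id t)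
  have h2 : HasDerivAt (fun y => f (x, y)) (fderiv ℝ f (x, t) (0, 1)) t :=
    (((hf.differentiable (by simp)) (x, t)).hasFDerivAt).comp_hasDerivAt t h1
  rw [pd2_eq_fderiv_s12 hf]
  exact h2

lemma integral_sq_eq {ν : Measure (ℝ × ℝ)} {u : ℝ × ℝ → ℝ} (hm : MemLp u 2 ν) :
    ∫ p, u p ^ 2 ∂ν = (eLpNorm u 2 ν).toReal ^ 2 := by
  have hI0 : 0 ≤ ∫ a, ‖u a‖ ^ ((2:ℝ≥0∞).toReal) ∂ν :=
    integral_nonneg fun p => Real.rpow_nonneg (norm_nonneg _) _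
  rw [hm.eLpNorm_eq_integral_rpow_norm two_ne_zero ENNReal.ofNat_ne_top,
      ENNReal.toReal_ofReal (Real.rpow_nonneg hI0 _),
      ← Real.rpow_natCast (_ ^ ((2:ℝ≥0∞).toReal)⁻¹ : ℝ) 2, ← Real.rpow_mul hI0]
  rw [show ((2:ℝ≥0∞).toReal)⁻¹ * (2:ℕ) = 1 by norm_num, Real.rpow_one]
  exact integral_congr_ae (Filter.Eventually.of_forall fun p => by
    show u p ^ 2 = ‖u p‖ ^ ((2:ℝ≥0∞).toReal)
    rw [show ((2:ℝ≥0∞).toReal) = ((2:ℕ):ℝ) by norm_num, Real.rpow_natCast,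
      Real.norm_eq_abs, sq_abs])


noncomputable def Fsq (g : ℝ × ℝ → ℝ) : ℝ → ℝ := fun y => ∫ t in (0:ℝ)..1, (g (t, y))^2
noncomputable def Fd (g : ℝ × ℝ → ℝ) : ℝ → ℝ :=
  fun y => ∫ t in (0:ℝ)..1, 2 * g (t, y) * pd2 g (t, y)
noncomputable def Gfun (g k : ℝ × ℝ → ℝ) : ℝ → ℝ :=
  fun y => ∫ t in (0:ℝ)..1, ((g (t, y))^2 + (k (t, y))^2)

lemma cont_slice {g : ℝ × ℝ → ℝ} (hg : Continuous g) (y : ℝ) :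
    Continuous fun t => g (t, y) := hg.comp (continuous_id.prodMk continuous_const)

lemma cont_slice2 {g : ℝ × ℝ → ℝ} (hg : Continuous g) (x : ℝ) :
    Continuous fun t => g (x, t) := hg.comp (continuous_const.prodMk continuous_id)

lemma Fd_cont {g : ℝ × ℝ → ℝ} (hg : ContDiff ℝ (⊤ : ℕ∞) g) : Continuous (Fd g) := by
  have h : Continuous (Function.uncurry fun (y t : ℝ) => 2 * g (t, y) * pd2 g (t, y)) := by
    have hk := (contDiff_pd2_s12 hg).continuous
    have hs : Continuous fun q : ℝ × ℝ => (q.2, q.1) := continuous_snd.prodMk continuous_fst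
    exact ((continuous_const.mul (hg.continuous.comp hs)).mul (hk.comp hs))
  have := intervalIntegral.continuous_parametric_intervalIntegral_of_continuous'
    (μ := volume) (f := fun (y t : ℝ) => 2 * g (t, y) * pd2 g (t, y)) h 0 1
  exact this

lemma hasDerivAt_Fsq {g : ℝ × ℝ → ℝ} (hg : ContDiff ℝ (⊤ : ℕ∞) g) (y₀ : ℝ) :
    HasDerivAt (Fsq g) (Fd g y₀) y₀ := by
  have hk := (contDiff_pd2_s12 hg).continuous
  have hgc := hg.continuous
  obtain ⟨C, hC⟩ := (IsCompact.exists_bound_of_continuousOn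
    ((isCompact_Icc.prod isCompact_Icc : IsCompact
        ((Set.Icc (0:ℝ) 1) ×ˢ (Set.Icc (y₀-1) (y₀+1)))))
    (Continuous.continuousOn (by
      exact (continuous_const.mul hgc).mul hk : Continuous fun q : ℝ × ℝ => 2 * g q * pd2 g q)))
  have main := intervalIntegral.hasDerivAt_integral_of_dominated_loc_of_deriv_le
    (F := fun y t => (g (t, y))^2) (F' := fun y t => 2 * g (t, y) * pd2 g (t, y))
    (x₀ := y₀) (a := (0:ℝ)) (b := 1) (bound := fun _ => C) (s := Metric.ball y₀ 1) (μ := volume) (Metric.ball_mem_nhds y₀ one_pos)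
    (Filter.Eventually.of_forall fun y =>
      (((cont_slice hgc y).pow 2).aestronglyMeasurable))
    (((cont_slice hgc y₀).pow 2).intervalIntegrable 0 1)
    (((continuous_const.mul (cont_slice hgc y₀)).mul (cont_slice hk y₀)).aestronglyMeasurable)
    (Filter.Eventually.of_forall fun t ht y hy => by
      have htmem : t ∈ Set.Icc (0:ℝ) 1 := by
        rw [Set.uIoc_of_le (zero_le_one)] at ht
        exact ⟨ht.1.le, ht.2⟩
      have hymem : y ∈ Set.Icc (y₀-1) (y₀+1) := by
        rw [Metric.mem_ball, Real.dist_eq, abs_lt] at hy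
        constructor <;> linarith [hy.1, hy.2]
      exact hC ((t, y) : ℝ × ℝ) (Set.mem_prod.mpr ⟨htmem, hymem⟩))
    (intervalIntegrable_const)
    (Filter.Eventually.of_forall fun t ht y hy => by
      have h := (hasDerivAt_snd hg t y).fun_pow 2
      simpa using h)
  exact main.2


lemma abs_two_mul_le (a b : ℝ) : |2 * a * b| ≤ a ^ 2 + b ^ 2 := by
  have h : |2 * a * b| = 2 * |a| * |b| := by
    rw [abs_mul, abs_mul, abs_two]
  nlinarith [sq_nonneg (|a| - |b|), sq_abs a, sq_abs b]

lemma cs_interval {u : ℝ → ℝ} (hu : Continuous u) :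
    (∫ t in (0:ℝ)..1, |u t|) ^ 2 ≤ ∫ t in (0:ℝ)..1, (u t) ^ 2 := by
  set m := ∫ t in (0:ℝ)..1, |u t| with hm
  have h0 : 0 ≤ ∫ t in (0:ℝ)..1, (|u t| - m) ^ 2 :=
    intervalIntegral.integral_nonneg zero_le_one fun t _ => sq_nonneg _
  have hexp : ∫ t in (0:ℝ)..1, (|u t| - m) ^ 2
      = (∫ t in (0:ℝ)..1, (u t) ^ 2) - 2 * m * m + m ^ 2 := by
    have h1 : ∀ t : ℝ, (|u t| - m) ^ 2 = (u t) ^ 2 - 2 * m * |u t| + m ^ 2 := fun t => by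
      rw [sub_sq, sq_abs]; ring
    simp_rw [h1]
    rw [intervalIntegral.integral_add
        (f := fun t => u t ^ 2 - 2 * m * |u t|) (g := fun _ => m ^ 2)
        (((hu.pow 2).sub (continuous_const.mul hu.abs)).intervalIntegrable 0 1)
        intervalIntegrable_const,
      intervalIntegral.integral_sub (f := fun t => u t ^ 2) (g := fun t => 2 * m * |u t|)
        ((hu.pow 2).intervalIntegrable 0 1)
        ((continuous_const.mul hu.abs).intervalIntegrable 0 1),
      intervalIntegral.integral_const_mul, intervalIntegral.integral_const]
    simp [← hm]
  nlinarith [h0, hexp]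

lemma osc_bound {f : ℝ × ℝ → ℝ} (hf : ContDiff ℝ (⊤ : ℕ∞) f) {x : ℝ}
    (hx : x ∈ Set.Icc (0:ℝ) 1) (y : ℝ) :
    |osc f (x, y)| ≤ ∫ t in (0:ℝ)..1, |pd1 f (t, y)| := by
  have hgc := (contDiff_pd1 hf).continuous
  have hfc := hf.continuous
  have hslice : ∀ y : ℝ, Continuous fun s => f (s, y) := fun y => cont_slice hfc y
  have heq : osc f (x, y) = ∫ s in (0:ℝ)..1, (f (x, y) - f (s, y)) := by
    rw [intervalIntegral.integral_sub intervalIntegrable_const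
      ((hslice y).intervalIntegrable 0 1)]
    simp [osc, havg, intervalIntegral.integral_const]
  rw [heq]
  have hstep : ∀ s ∈ Set.Icc (0:ℝ) 1,
      |f (x, y) - f (s, y)| ≤ ∫ t in (0:ℝ)..1, |pd1 f (t, y)| := by
    intro s hs
    have hftc : ∫ t in s..x, pd1 f (t, y) = f (x, y) - f (s, y) :=
      intervalIntegral.integral_eq_sub_of_hasDerivAt (fun t _ => hasDerivAt_fst hf t y)
        ((cont_slice hgc y).intervalIntegrable s x)
    rw [← hftc]
    have habs : ∀ a b : ℝ, a ∈ Set.Icc (0:ℝ) 1 → b ∈ Set.Icc (0:ℝ) 1 → a ≤ b →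
        |∫ t in a..b, pd1 f (t, y)| ≤ ∫ t in (0:ℝ)..1, |pd1 f (t, y)| := by
      intro a b ha hb hab
      calc |∫ t in a..b, pd1 f (t, y)| ≤ ∫ t in a..b, |pd1 f (t, y)| :=
            intervalIntegral.abs_integral_le_integral_abs hab
        _ ≤ ∫ t in (0:ℝ)..1, |pd1 f (t, y)| :=
            intervalIntegral.integral_mono_interval ha.1 hab hb.2
              (Filter.Eventually.of_forall fun t => abs_nonneg _)
              ((cont_slice hgc y).abs.intervalIntegrable 0 1)
    rcases le_total s x with h | h
    · exact habs s x hs hx h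
    · rw [intervalIntegral.integral_symm, abs_neg]
      exact habs x s hx hs h
  calc |∫ s in (0:ℝ)..1, (f (x, y) - f (s, y))|
      ≤ ∫ s in (0:ℝ)..1, |f (x, y) - f (s, y)| :=
        intervalIntegral.abs_integral_le_integral_abs zero_le_one
    _ ≤ ∫ _ in (0:ℝ)..1, (∫ t in (0:ℝ)..1, |pd1 f (t, y)|) :=
        intervalIntegral.integral_mono_on zero_le_one
          ((continuous_const.sub (hslice y)).abs.intervalIntegrable 0 1)
          intervalIntegrable_const hstep
    _ = ∫ t in (0:ℝ)..1, |pd1 f (t, y)| := by simp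

lemma abs_Fd_le {g : ℝ × ℝ → ℝ} (hg : ContDiff ℝ (⊤ : ℕ∞) g) (y : ℝ) :
    |Fd g y| ≤ Gfun g (pd2 g) y := by
  have hgc := hg.continuous
  have hk := (contDiff_pd2_s12 hg).continuous
  calc |Fd g y| ≤ ∫ t in (0:ℝ)..1, |2 * g (t, y) * pd2 g (t, y)| :=
      intervalIntegral.abs_integral_le_integral_abs zero_le_one
    _ ≤ ∫ t in (0:ℝ)..1, ((g (t, y)) ^ 2 + (pd2 g (t, y)) ^ 2) :=
      intervalIntegral.integral_mono_on zero_le_one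
        (((continuous_const.mul (cont_slice hgc y)).mul (cont_slice hk y)).abs.intervalIntegrable 0 1)
        ((((cont_slice hgc y).pow 2).add ((cont_slice hk y).pow 2)).intervalIntegrable 0 1)
        (fun t _ => abs_two_mul_le _ _)

end Aux


/-- `L^∞` bound for the oscillation part by the `H¹` norm of its horizontal derivative:
`‖f̃‖_{L^∞(Ω)} ≤ C ‖∂₁f̃‖_{H¹(Ω)}`. -/
theorem stmt12 : ∃ C : ℝ, 0 < C ∧ ∀ f : ℝ × ℝ → ℝ,
    ContDiff ℝ (⊤ : ℕ∞) f → Per f →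
    eLpNorm (pd1 (osc f)) 2 μΩ + eLpNorm (pd1 (pd1 (osc f))) 2 μΩ +
      eLpNorm (pd2 (pd1 (osc f))) 2 μΩ < ⊤ →
    eLpNorm (osc f) ⊤ μΩ ≤ ENNReal.ofReal C *
      (eLpNorm (pd1 (osc f)) 2 μΩ + eLpNorm (pd1 (pd1 (osc f))) 2 μΩ +
        eLpNorm (pd2 (pd1 (osc f))) 2 μΩ) := by
  refine ⟨1, one_pos, ?_⟩
  intro f hf _hper hfin
  have hosc : pd1 (osc f) = pd1 f := by
    funext p
    simp only [pd1]
    have heq : (fun x => osc f (x, p.2)) = fun x => f (x, p.2) - havg f p.2 := rfl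
    rw [heq]
    exact deriv_sub_const _
  rw [hosc] at hfin ⊢
  set g : ℝ × ℝ → ℝ := pd1 f with hgdef
  have hg : ContDiff ℝ (⊤ : ℕ∞) g := contDiff_pd1 hf
  have hk : ContDiff ℝ (⊤ : ℕ∞) (pd2 g) := contDiff_pd2_s12 hg
  have hgc : Continuous g := hg.continuous
  have hkc : Continuous (pd2 g) := hk.continuous
  obtain ⟨h12, h3t⟩ := ENNReal.add_lt_top.mp hfin
  obtain ⟨h1t, h2t⟩ := ENNReal.add_lt_top.mp h12
  have hm1 : MemLp g 2 μΩ := ⟨hgc.aestronglyMeasurable, h1t⟩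
  have hm3 : MemLp (pd2 g) 2 μΩ := ⟨hkc.aestronglyMeasurable, h3t⟩
  have hb1 : 0 ≤ (eLpNorm g 2 μΩ).toReal := ENNReal.toReal_nonneg
  have hb2 : 0 ≤ (eLpNorm (pd1 g) 2 μΩ).toReal := ENNReal.toReal_nonneg
  have hb3 : 0 ≤ (eLpNorm (pd2 g) 2 μΩ).toReal := ENNReal.toReal_nonneg
  have hg2int : Integrable (fun p : ℝ × ℝ => g p ^ 2) μΩ := hm1.integrable_sq
  have hk2int : Integrable (fun p : ℝ × ℝ => (pd2 g) p ^ 2) μΩ := hm3.integrable_sq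
  have hsum_int : Integrable (fun p : ℝ × ℝ => g p ^ 2 + (pd2 g) p ^ 2) μΩ :=
    hg2int.add hk2int
  have hres : ∀ (u : ℝ × ℝ → ℝ), Integrable u μΩ →
      Integrable (fun y => ∫ t in (0:ℝ)..1, u (t, y)) volume := by
    intro u hu
    have h : Integrable
        (fun y => ∫ x, u (x, y) ∂((volume : Measure ℝ).restrict (Set.Ioc (0:ℝ) 1)))
        volume := Integrable.integral_prod_right hu
    exact h.congr (Filter.Eventually.of_forall fun y =>
      (intervalIntegral.integral_of_le zero_le_one).symm)
  have hFsq_int : Integrable (Fsq g) volume := hres _ hg2int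
  have hG_int : Integrable (Gfun g (pd2 g)) volume := hres _ hsum_int
  have hGnn : ∀ t : ℝ, 0 ≤ Gfun g (pd2 g) t := fun t =>
    intervalIntegral.integral_nonneg zero_le_one (fun s _ => by positivity)
  have hIG : ∫ y, Gfun g (pd2 g) y
      = (eLpNorm g 2 μΩ).toReal ^ 2 + (eLpNorm (pd2 g) 2 μΩ).toReal ^ 2 := by
    have h2 : ∫ z, (g z ^ 2 + pd2 g z ^ 2) ∂μΩ
        = ∫ y, ∫ x, (g (x, y) ^ 2 + pd2 g (x, y) ^ 2)
            ∂((volume : Measure ℝ).restrict (Set.Ioc (0:ℝ) 1)) ∂(volume : Measure ℝ) :=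
      MeasureTheory.integral_prod_symm _ hsum_int
    have h1 : ∀ y : ℝ, Gfun g (pd2 g) y
        = ∫ x, (g (x, y) ^ 2 + pd2 g (x, y) ^ 2)
            ∂((volume : Measure ℝ).restrict (Set.Ioc (0:ℝ) 1)) :=
      fun y => intervalIntegral.integral_of_le zero_le_one
    calc ∫ y, Gfun g (pd2 g) y = ∫ z, (g z ^ 2 + pd2 g z ^ 2) ∂μΩ := by
          rw [h2]
          exact integral_congr_ae (Filter.Eventually.of_forall fun y => h1 y)
      _ = _ := by
          rw [integral_add hg2int hk2int, integral_sq_eq hm1, integral_sq_eq hm3]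
  have hFb_le : ∀ y : ℝ, Fsq g y
      ≤ (eLpNorm g 2 μΩ).toReal ^ 2 + (eLpNorm (pd2 g) 2 μΩ).toReal ^ 2 := by
    intro y
    by_contra hlt
    push_neg at hlt
    have hFTC : ∀ z : ℝ, |Fsq g y - Fsq g z|
        ≤ (eLpNorm g 2 μΩ).toReal ^ 2 + (eLpNorm (pd2 g) 2 μΩ).toReal ^ 2 := by
      intro z
      have heq : ∫ t in z..y, Fd g t = Fsq g y - Fsq g z :=
        intervalIntegral.integral_eq_sub_of_hasDerivAt (fun t _ => hasDerivAt_Fsq hg t)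
          ((Fd_cont hg).intervalIntegrable z y)
      rw [← heq]
      have hbound : ∀ a b : ℝ, a ≤ b → |∫ t in a..b, Fd g t|
          ≤ (eLpNorm g 2 μΩ).toReal ^ 2 + (eLpNorm (pd2 g) 2 μΩ).toReal ^ 2 := by
        intro a b hab
        calc |∫ t in a..b, Fd g t| ≤ ∫ t in a..b, |Fd g t| :=
              intervalIntegral.abs_integral_le_integral_abs hab
          _ ≤ ∫ t in a..b, Gfun g (pd2 g) t :=
              intervalIntegral.integral_mono_on hab
                ((Fd_cont hg).abs.intervalIntegrable a b)
                hG_int.intervalIntegrable (fun t _ => abs_Fd_le hg t)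
          _ = ∫ t in Set.Ioc a b, Gfun g (pd2 g) t :=
              intervalIntegral.integral_of_le hab
          _ ≤ ∫ t, Gfun g (pd2 g) t :=
              setIntegral_le_integral hG_int (Filter.Eventually.of_forall fun t => hGnn t)
          _ = _ := hIG
      rcases le_total z y with h | h
      · exact hbound z y h
      · rw [intervalIntegral.integral_symm, abs_neg]
        exact hbound y z h
    have hε : 0 < Fsq g y - ((eLpNorm g 2 μΩ).toReal ^ 2 + (eLpNorm (pd2 g) 2 μΩ).toReal ^ 2) :=
      sub_pos.mpr hlt
    have hlow : ∀ z : ℝ,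
        Fsq g y - ((eLpNorm g 2 μΩ).toReal ^ 2 + (eLpNorm (pd2 g) 2 μΩ).toReal ^ 2)
          ≤ Fsq g z := by
      intro z
      have h := (abs_le.mp (hFTC z)).2
      linarith
    have hconst : Integrable (fun _ : ℝ =>
        Fsq g y - ((eLpNorm g 2 μΩ).toReal ^ 2 + (eLpNorm (pd2 g) 2 μΩ).toReal ^ 2))
        volume :=
      hFsq_int.mono' aestronglyMeasurable_const (Filter.Eventually.of_forall fun z => by
        rw [Real.norm_eq_abs, abs_of_pos hε]; exact hlow z)
    rw [integrable_const_iff] at hconst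
    rcases hconst with h | h
    · exact absurd h hε.ne'
    · exact absurd (measure_lt_top (volume : Measure ℝ) Set.univ) (by simp [Real.volume_univ])
  have hae : ∀ᵐ p ∂μΩ, p.1 ∈ Set.Ioc (0:ℝ) 1 := by
    rw [ae_iff]
    have hset : {p : ℝ × ℝ | ¬ p.1 ∈ Set.Ioc (0:ℝ) 1}
        = (Set.Ioc (0:ℝ) 1)ᶜ ×ˢ (Set.univ : Set ℝ) := by
      ext p; simp
    rw [hset]
    show (((volume : Measure ℝ).restrict (Set.Ioc (0:ℝ) 1)).prod volume) _ = 0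
    rw [Measure.prod_prod, Measure.restrict_apply measurableSet_Ioc.compl]
    simp
  have hbound : ∀ᵐ p ∂μΩ, ‖osc f p‖
      ≤ (eLpNorm g 2 μΩ).toReal + (eLpNorm (pd1 g) 2 μΩ).toReal
        + (eLpNorm (pd2 g) 2 μΩ).toReal := by
    filter_upwards [hae] with p hp
    have h1 : |osc f (p.1, p.2)| ≤ ∫ t in (0:ℝ)..1, |g (t, p.2)| :=
      osc_bound hf ⟨hp.1.le, hp.2⟩ p.2
    have h2 : (∫ t in (0:ℝ)..1, |g (t, p.2)|) ^ 2 ≤ Fsq g p.2 :=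
      cs_interval (cont_slice hgc p.2)
    have h3 := hFb_le p.2
    have h4 : |osc f p| ^ 2
        ≤ (eLpNorm g 2 μΩ).toReal ^ 2 + (eLpNorm (pd2 g) 2 μΩ).toReal ^ 2 := by
      calc |osc f p| ^ 2 ≤ (∫ t in (0:ℝ)..1, |g (t, p.2)|) ^ 2 :=
            pow_le_pow_left₀ (abs_nonneg _) h1 2
        _ ≤ Fsq g p.2 := h2
        _ ≤ _ := h3
    rw [Real.norm_eq_abs]
    nlinarith [abs_nonneg (osc f p), mul_nonneg hb1 hb3, mul_nonneg hb1 hb2,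
      mul_nonneg hb2 hb3, hb1, hb2, hb3]
  have hfinal : eLpNorm (osc f) ⊤ μΩ ≤ ENNReal.ofReal
      ((eLpNorm g 2 μΩ).toReal + (eLpNorm (pd1 g) 2 μΩ).toReal
        + (eLpNorm (pd2 g) 2 μΩ).toReal) := by
    rw [eLpNorm_exponent_top]
    exact eLpNormEssSup_le_of_ae_bound hbound
  refine hfinal.trans ?_
  rw [ENNReal.ofReal_one, one_mul]
  have heq : (eLpNorm g 2 μΩ).toReal + (eLpNorm (pd1 g) 2 μΩ).toReal
        + (eLpNorm (pd2 g) 2 μΩ).toReal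
      = (eLpNorm g 2 μΩ + eLpNorm (pd1 g) 2 μΩ + eLpNorm (pd2 g) 2 μΩ).toReal := by
    rw [ENNReal.toReal_add h12.ne h3t.ne, ENNReal.toReal_add h1t.ne h2t.ne]
  rw [heq]
  exact ENNReal.ofReal_toReal_le
end

section
/- Consequence of Lemma on triple products combined with the strong Poincaré inequality: there is a constant C > 0 such that for any sufficiently regular f on Ω = 𝕋 × ℝ with zero horizontal average and any g, h with g, ∂₂g, h ∈ L²(Ω), one has |∫_Ω f g h dx| ≤ C ‖∂₁f‖_{L²} ‖g‖_{L²}^{1/2} ‖∂₂g‖_{L²}^{1/2} ‖h‖_{L²}. -/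
open MeasureTheory Real

/-!
For `f` with zero horizontal average, the one-dimensional Poincaré bound gives
`|f (x, y)| ≤ a y := ∫₀¹ |∂₁f (s, y)| ds` uniformly in `x`, and `‖a‖₂ ≤ ‖∂₁f‖₂` by Cauchy–Schwarz
on the unit interval. For `g`, the one-dimensional Agmon inequality `u(y)² ≤ 2 ∫ |u u'|` gives
`|g (x, y)| ≤ b x := (2 ∫ |g ∂₂g| (x, t) dt)^{1/2}` uniformly in `y`, with `‖b‖₂² ≤ 2 ‖g‖₂ ‖∂₂g‖₂`.
Integrating `a y * b x * |h (x, y)|` first in `y` and then in `x`, with Cauchy–Schwarz each time,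
bounds `∫ |f g h|` by `‖a‖₂ ‖b‖₂ ‖h‖₂`.
-/

open Filter Set
open scoped ENNReal Interval Topology

section Product

variable {α β E : Type*} [MeasurableSpace α] [MeasurableSpace β] [NormedAddCommGroup E]
  {μ : Measure α} {ν : Measure β}

lemma lintegral_mul_le_eLpNorm_two_mul {f g : α → ℝ≥0∞} (hf : AEMeasurable f μ)
    (hg : AEMeasurable g μ) : ∫⁻ x, f x * g x ∂μ ≤ eLpNorm f 2 μ * eLpNorm g 2 μ := by
  simpa [eLpNorm_eq_lintegral_rpow_enorm_toReal] using
    ENNReal.lintegral_mul_le_Lp_mul_Lq μ HolderConjugate.two_two hf hg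

lemma eLpNorm_prod_eq_iterated [SFinite ν] {p : ℝ≥0∞} (hp0 : p ≠ 0) (hp : p ≠ ∞)
    {F : α × β → E} (hF : AEStronglyMeasurable F (μ.prod ν)) :
    eLpNorm F p (μ.prod ν) = eLpNorm (fun x => eLpNorm (fun y => F (x, y)) p ν) p μ := by
  have hp' : p.toReal ≠ 0 := ENNReal.toReal_ne_zero.2 ⟨hp0, hp⟩
  simp only [eLpNorm_eq_lintegral_rpow_enorm_toReal hp0 hp, enorm_eq_self,
    ← ENNReal.rpow_mul, one_div_mul_cancel hp', ENNReal.rpow_one]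
  rw [lintegral_prod _ (hF.enorm.pow_const _)]

lemma eLpNorm_prod_eq_iterated_symm [SFinite μ] [SFinite ν] {p : ℝ≥0∞} (hp0 : p ≠ 0)
    (hp : p ≠ ∞) {F : α × β → E} (hF : AEStronglyMeasurable F (μ.prod ν)) :
    eLpNorm F p (μ.prod ν) = eLpNorm (fun y => eLpNorm (fun x => F (x, y)) p μ) p ν := by
  have hp' : p.toReal ≠ 0 := ENNReal.toReal_ne_zero.2 ⟨hp0, hp⟩
  simp only [eLpNorm_eq_lintegral_rpow_enorm_toReal hp0 hp, enorm_eq_self,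
    ← ENNReal.rpow_mul, one_div_mul_cancel hp', ENNReal.rpow_one]
  rw [lintegral_prod_symm _ (hF.enorm.pow_const _)]

lemma MeasureTheory.MemLp.ae_memLp_prodMk_left [SFinite ν] {p : ℝ≥0∞} (hp0 : p ≠ 0)
    (hp : p ≠ ∞) {F : α × β → E} (hF : MemLp F p (μ.prod ν)) :
    ∀ᵐ x ∂μ, MemLp (fun y => F (x, y)) p ν := by
  have hint := lintegral_rpow_enorm_lt_top_of_eLpNorm_lt_top hp0 hp hF.2
  rw [lintegral_prod _ (hF.1.enorm.pow_const _)] at hint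
  filter_upwards [hF.1.prodMk_left,
    ae_lt_top' (hF.1.enorm.pow_const _).lintegral_prod_right' hint.ne] with x hx hfin
  exact ⟨hx, (eLpNorm_lt_top_iff_lintegral_rpow_enorm_lt_top hp0 hp).2 hfin⟩

lemma eLpNorm_lintegral_enorm_le [IsProbabilityMeasure μ] [SFinite ν] {F : α × β → E}
    (hF : AEStronglyMeasurable F (μ.prod ν)) :
    eLpNorm (fun y => ∫⁻ x, ‖F (x, y)‖ₑ ∂μ) 2 ν ≤ eLpNorm F 2 (μ.prod ν) := by
  rw [eLpNorm_prod_eq_iterated_symm two_ne_zero ENNReal.ofNat_ne_top hF]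
  refine eLpNorm_mono_enorm_ae ?_
  filter_upwards [hF.prodMk_right] with y hy
  rw [enorm_eq_self, enorm_eq_self, ← eLpNorm_one_eq_lintegral_enorm]
  exact eLpNorm_le_eLpNorm_of_exponent_le one_le_two hy

lemma eLpNorm_rpow_half_lintegral_enorm_mul_le [SFinite ν] (c : ℝ≥0∞) {F G : α × β → E}
    (hF : AEStronglyMeasurable F (μ.prod ν)) (hG : AEStronglyMeasurable G (μ.prod ν)) :
    eLpNorm (fun x => (c * ∫⁻ y, ‖F (x, y)‖ₑ * ‖G (x, y)‖ₑ ∂ν) ^ (1 / 2 : ℝ)) 2 μ ≤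
      (c * (eLpNorm F 2 (μ.prod ν) * eLpNorm G 2 (μ.prod ν))) ^ (1 / 2 : ℝ) := by
  have hFG : AEMeasurable (fun p => ‖F p‖ₑ * ‖G p‖ₑ) (μ.prod ν) := hF.enorm.mul hG.enorm
  have hL : eLpNorm (fun x => (c * ∫⁻ y, ‖F (x, y)‖ₑ * ‖G (x, y)‖ₑ ∂ν) ^ (1 / 2 : ℝ)) 2 μ =
      (c * ∫⁻ p, ‖F p‖ₑ * ‖G p‖ₑ ∂μ.prod ν) ^ (1 / 2 : ℝ) := by
    simp only [eLpNorm_eq_lintegral_rpow_enorm_toReal two_ne_zero ENNReal.ofNat_ne_top,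
      enorm_eq_self, ← ENNReal.rpow_mul, ENNReal.toReal_ofNat,
      one_div_mul_cancel (two_ne_zero (α := ℝ)), ENNReal.rpow_one]
    rw [lintegral_const_mul'' _ hFG.lintegral_prod_right', ← lintegral_prod _ hFG]
  rw [hL]
  gcongr
  simpa using lintegral_mul_le_eLpNorm_two_mul hF.enorm hG.enorm

theorem lintegral_enorm_mul_mul_le_of_le [SFinite ν] {f g h : α × β → E} {a : β → ℝ≥0∞}
    {b : α → ℝ≥0∞} (ha : AEMeasurable a ν) (hb : AEMeasurable b μ)
    (hh : AEStronglyMeasurable h (μ.prod ν)) (hfa : ∀ᵐ x ∂μ, ∀ y, ‖f (x, y)‖ₑ ≤ a y)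
    (hgb : ∀ᵐ x ∂μ, ∀ y, ‖g (x, y)‖ₑ ≤ b x) :
    ∫⁻ p, ‖f p‖ₑ * ‖g p‖ₑ * ‖h p‖ₑ ∂μ.prod ν ≤
      eLpNorm a 2 ν * eLpNorm b 2 μ * eLpNorm h 2 (μ.prod ν) := by
  set N : α → ℝ≥0∞ := fun x => eLpNorm (fun y => h (x, y)) 2 ν
  have hN : AEMeasurable N μ := by
    simp only [N, eLpNorm_eq_lintegral_rpow_enorm_toReal two_ne_zero ENNReal.ofNat_ne_top]
    exact (hh.enorm.pow_const _).lintegral_prod_right'.pow_const _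
  calc ∫⁻ p, ‖f p‖ₑ * ‖g p‖ₑ * ‖h p‖ₑ ∂μ.prod ν
      ≤ ∫⁻ x, ∫⁻ y, ‖f (x, y)‖ₑ * ‖g (x, y)‖ₑ * ‖h (x, y)‖ₑ ∂ν ∂μ := lintegral_prod_le _
    _ ≤ ∫⁻ x, eLpNorm a 2 ν * (b x * N x) ∂μ := by
        refine lintegral_mono_ae ?_
        filter_upwards [hfa, hgb, hh.prodMk_left] with x hfx hgx hhx
        calc ∫⁻ y, ‖f (x, y)‖ₑ * ‖g (x, y)‖ₑ * ‖h (x, y)‖ₑ ∂ν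
            ≤ ∫⁻ y, b x * (a y * ‖h (x, y)‖ₑ) ∂ν := lintegral_mono fun y => by
              calc ‖f (x, y)‖ₑ * ‖g (x, y)‖ₑ * ‖h (x, y)‖ₑ ≤ a y * b x * ‖h (x, y)‖ₑ := by
                    gcongr
                    exacts [hfx y, hgx y]
                _ = b x * (a y * ‖h (x, y)‖ₑ) := by ring
          _ = b x * ∫⁻ y, a y * ‖h (x, y)‖ₑ ∂ν := lintegral_const_mul'' _ (ha.mul hhx.enorm)
          _ ≤ b x * (eLpNorm a 2 ν * N x) := by
              gcongr
              simpa using lintegral_mul_le_eLpNorm_two_mul ha hhx.enorm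
          _ = eLpNorm a 2 ν * (b x * N x) := by ring
    _ = eLpNorm a 2 ν * ∫⁻ x, b x * N x ∂μ := lintegral_const_mul'' _ (hb.mul hN)
    _ ≤ eLpNorm a 2 ν * (eLpNorm b 2 μ * eLpNorm N 2 μ) := by
        gcongr
        exact lintegral_mul_le_eLpNorm_two_mul hb hN
    _ = eLpNorm a 2 ν * eLpNorm b 2 μ * eLpNorm h 2 (μ.prod ν) := by
        rw [eLpNorm_prod_eq_iterated two_ne_zero ENNReal.ofNat_ne_top hh, mul_assoc]

end Product

lemma enorm_le_lintegral_enorm_deriv_of_intervalIntegral_eq_zero {v : ℝ → ℝ}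
    (hv : Differentiable ℝ v) {a b : ℝ} (hab : a < b) (h0 : ∫ s in a..b, v s = 0) {x : ℝ}
    (hx : x ∈ Icc a b) : ‖v x‖ₑ ≤ ∫⁻ s in Ioc a b, ‖deriv v s‖ₑ := by
  obtain ⟨c, hc, hvc⟩ := exists_eq_interval_average hab.ne hv.continuous.continuousOn
  rw [interval_average_eq, h0, smul_zero] at hvc
  by_cases hint : IntegrableOn (deriv v) (Ioc a b)
  · have hsub : Ι c x ⊆ Ioc a b := by
      have hc' : c ∈ Ioo a b := by simpa [uIoo, hab.le] using hc
      exact Ioc_subset_Ioc (le_min hc'.1.le hx.1) (max_le hc'.2.le hx.2)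
    calc ‖v x‖ₑ = ‖∫ s in c..x, deriv v s‖ₑ := by
          rw [intervalIntegral.integral_deriv_eq_sub (fun s _ => hv s)
            (intervalIntegrable_iff.2 (hint.mono_set hsub)), hvc, sub_zero]
      _ = ‖∫ s in Ι c x, deriv v s‖ₑ := by
          simp only [← ofReal_norm, intervalIntegral.norm_integral_eq_norm_integral_uIoc]
      _ ≤ ∫⁻ s in Ι c x, ‖deriv v s‖ₑ := enorm_integral_le_lintegral_enorm _
      _ ≤ ∫⁻ s in Ioc a b, ‖deriv v s‖ₑ := lintegral_mono_set hsub
  · have hinf : ∫⁻ s in Ioc a b, ‖deriv v s‖ₑ = ∞ := by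
      contrapose! hint
      exact ⟨(measurable_deriv v).aestronglyMeasurable, hint.lt_top⟩
    simp [hinf]

lemma enorm_sq_le_two_mul_lintegral_enorm_mul_deriv {u : ℝ → ℝ} (hu : Differentiable ℝ u)
    (hu2 : MemLp u 2) (y : ℝ) : ‖u y‖ₑ ^ 2 ≤ 2 * ∫⁻ t, ‖u t‖ₑ * ‖deriv u t‖ₑ := by
  by_cases hfin : ∫⁻ t, ‖u t‖ₑ * ‖deriv u t‖ₑ = ∞
  · simp [hfin]
  have hderiv : ∀ t, HasDerivAt (fun s => u s ^ 2) (2 * (u t * deriv u t)) t := fun t =>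
    ((hu t).hasDerivAt.pow 2).congr_deriv (by simp; ring)
  have hint : Integrable (fun t => 2 * (u t * deriv u t)) := by
    refine Integrable.const_mul ⟨(hu.continuous.measurable.mul
      (measurable_deriv u)).aestronglyMeasurable, ?_⟩ 2
    simpa [HasFiniteIntegral, enorm_mul] using lt_top_iff_ne_top.2 hfin
  have hlim : Tendsto (fun s => u s ^ 2) atBot (𝓝 0) :=
    tendsto_zero_of_hasDerivAt_of_integrableOn_Iic (a := y) (fun t _ => hderiv t)
      hint.integrableOn ((memLp_two_iff_integrable_sq hu2.1).1 hu2).integrableOn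
  have hftc : ∫ t in Iic y, 2 * (u t * deriv u t) = u y ^ 2 := by
    simpa using
      integral_Iic_of_hasDerivAt_of_tendsto' (fun t _ => hderiv t) hint.integrableOn hlim
  calc ‖u y‖ₑ ^ 2 = ‖∫ t in Iic y, 2 * (u t * deriv u t)‖ₑ := by rw [hftc, enorm_pow]
    _ ≤ ∫⁻ t in Iic y, ‖2 * (u t * deriv u t)‖ₑ := enorm_integral_le_lintegral_enorm _
    _ ≤ ∫⁻ t, ‖2 * (u t * deriv u t)‖ₑ := setLIntegral_le_lintegral _ _
    _ = 2 * ∫⁻ t, ‖u t‖ₑ * ‖deriv u t‖ₑ := by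
        rw [← lintegral_const_mul' _ _ ENNReal.ofNat_ne_top]
        refine lintegral_congr fun t => ?_
        rw [enorm_mul, enorm_mul, Real.enorm_of_nonneg zero_le_two, ENNReal.ofReal_ofNat]

theorem lintegral_enorm_mul_mul_le_of_havg_eq_zero {f g h : ℝ × ℝ → ℝ}
    (hf : Differentiable ℝ f) (hg : Differentiable ℝ g) (hf0 : ∀ y, havg f y = 0)
    (hf1 : AEStronglyMeasurable (pd1 f) μΩ) (hg0 : MemLp g 2 μΩ)
    (hg2 : AEStronglyMeasurable (pd2 g) μΩ) (hh : AEStronglyMeasurable h μΩ) :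
    ∫⁻ p, ‖f p‖ₑ * ‖g p‖ₑ * ‖h p‖ₑ ∂μΩ ≤
      eLpNorm (pd1 f) 2 μΩ * (2 * (eLpNorm g 2 μΩ * eLpNorm (pd2 g) 2 μΩ)) ^ (1 / 2 : ℝ) *
        eLpNorm h 2 μΩ := by
  set ν : Measure ℝ := volume.restrict (Ioc 0 1)
  have : IsProbabilityMeasure ν := ⟨by simp [ν]⟩
  have hfa : ∀ᵐ x ∂ν, ∀ y, ‖f (x, y)‖ₑ ≤ ∫⁻ s, ‖pd1 f (s, y)‖ₑ ∂ν := by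
    filter_upwards [ae_restrict_mem measurableSet_Ioc] with x hx y
    exact enorm_le_lintegral_enorm_deriv_of_intervalIntegral_eq_zero (by fun_prop) zero_lt_one
      (hf0 y) (Ioc_subset_Icc_self hx)
  have hgb : ∀ᵐ x ∂ν, ∀ y,
      ‖g (x, y)‖ₑ ≤ (2 * ∫⁻ t, ‖g (x, t)‖ₑ * ‖pd2 g (x, t)‖ₑ) ^ (1 / 2 : ℝ) := by
    filter_upwards [hg0.ae_memLp_prodMk_left two_ne_zero ENNReal.ofNat_ne_top] with x hx y
    rw [one_div, ENNReal.le_rpow_inv_iff two_pos]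
    exact_mod_cast enorm_sq_le_two_mul_lintegral_enorm_mul_deriv (by fun_prop) hx y
  calc ∫⁻ p, ‖f p‖ₑ * ‖g p‖ₑ * ‖h p‖ₑ ∂μΩ
      ≤ eLpNorm (fun y => ∫⁻ s, ‖pd1 f (s, y)‖ₑ ∂ν) 2 volume *
        eLpNorm (fun x => (2 * ∫⁻ t, ‖g (x, t)‖ₑ * ‖pd2 g (x, t)‖ₑ) ^ (1 / 2 : ℝ)) 2 ν *
          eLpNorm h 2 μΩ :=
        lintegral_enorm_mul_mul_le_of_le hf1.enorm.lintegral_prod_left'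
          (((hg0.1.enorm.mul hg2.enorm).lintegral_prod_right'.const_mul 2).pow_const _) hh hfa hgb
    _ ≤ _ := by
        gcongr
        · exact eLpNorm_lintegral_enorm_le hf1
        · exact eLpNorm_rpow_half_lintegral_enorm_mul_le 2 hg0.1 hg2

/-- Triple product bound combined with the strong Poincaré inequality: for `f` with zero
horizontal average, `|∫ f g h| ≤ C ‖∂₁f‖ ‖g‖^{1/2} ‖∂₂g‖^{1/2} ‖h‖`. -/
theorem stmt19 : ∃ C : ℝ, 0 < C ∧ ∀ f g h : ℝ × ℝ → ℝ,
    Per f → Per g → Per h → Differentiable ℝ f → Differentiable ℝ g →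
    (∀ y, havg f y = 0) →
    MemLp f 2 μΩ → MemLp (pd1 f) 2 μΩ →
    MemLp g 2 μΩ → MemLp (pd2 g) 2 μΩ → MemLp h 2 μΩ →
    |∫ p, f p * g p * h p ∂μΩ| ≤
      C * (eLpNorm (pd1 f) 2 μΩ).toReal *
        (eLpNorm g 2 μΩ).toReal ^ (1/2 : ℝ) * (eLpNorm (pd2 g) 2 μΩ).toReal ^ (1/2 : ℝ) *
        (eLpNorm h 2 μΩ).toReal := by
  refine ⟨√2, by positivity, fun f g h _ _ _ hf hg hf0 _ hf1 hg0 hg2 hh => ?_⟩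
  set E := eLpNorm (pd1 f) 2 μΩ * (2 * (eLpNorm g 2 μΩ * eLpNorm (pd2 g) 2 μΩ)) ^ (1 / 2 : ℝ) *
    eLpNorm h 2 μΩ
  have hE : ‖∫ p, f p * g p * h p ∂μΩ‖ₑ ≤ E := (enorm_integral_le_lintegral_enorm _).trans <| by
    simpa only [enorm_mul] using
      lintegral_enorm_mul_mul_le_of_havg_eq_zero hf hg hf0 hf1.1 hg0 hg2.1 hh.1
  have hEfin : E ≠ ∞ := by
    have := hf1.2.ne; have := hg0.2.ne; have := hg2.2.ne; have := hh.2.ne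
    finiteness
  calc |∫ p, f p * g p * h p ∂μΩ| = (‖∫ p, f p * g p * h p ∂μΩ‖ₑ).toReal := by
        rw [toReal_enorm, Real.norm_eq_abs]
    _ ≤ E.toReal := ENNReal.toReal_mono hEfin hE
    _ = _ := by
        simp only [E, ENNReal.toReal_mul, ← ENNReal.toReal_rpow, ENNReal.toReal_ofNat]
        rw [Real.mul_rpow, Real.mul_rpow, Real.sqrt_eq_rpow]
        ring
        all_goals positivity
end
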